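/- arXiv:math/9411235 — 4 statements merged into one kernel-verified Lean document; each statement's English description precedes it below -/
import Mathlib

section
/- Let F be a finite directed graph and v a vertex of F. For integers 1 ≤ k < r, for every k-variable first-order formula φ(x₁,…,x_l) in the language of one binary relation (edge relation), and for all elements a₁,…,a_l of F other than v (viewed as common elements of F_k and F_r), we have F_k ⊨ φ(a₁,…,a_l) if and only if F_r ⊨ φ(a₁,…,a_l). In particular F_k and F_r satisfy the same k-variable first-order sentences. -/
/-!
STATEMENT 0.  Clique-replacement lemma (first-order, `k`-variable instance).

`GFml k` is the syntax of first-order formulas in the language of one binary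
(edge) relation that use at most `k` distinct individual variables; variables
may be reused, and quantifiers rebind one of the `k` variable slots.  An
assignment is a map `Fin k → V`; satisfaction of a formula under an assignment
determines in particular the truth of `φ(a₁,…,a_l)` whenever the free variables
of `φ` are assigned the parameters `a₁,…,a_l`.
-/

/-- `k`-variable first-order formulas over one binary relation symbol. -/
inductive GFml (k : ℕ) : Type
  | eq   : Fin k → Fin k → GFml k
  | edge : Fin k → Fin k → GFml k
  | not  : GFml k → GFml k
  | and  : GFml k → GFml k → GFml k
  | ex   : Fin k → GFml k → GFml k

namespace GFml

/-- Satisfaction of a `k`-variable formula in a directed graph `(V, E)`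
under an assignment of the `k` variables. -/
def Sat {k : ℕ} {V : Type} (E : V → V → Prop) : GFml k → (Fin k → V) → Prop
  | eq i j, v => v i = v j
  | edge i j, v => E (v i) (v j)
  | not φ, v => ¬ Sat E φ v
  | and φ ψ, v => Sat E φ v ∧ Sat E ψ v
  | ex i φ, v => ∃ a : V, Sat E φ (Function.update v i a)

/-- The free variables of a formula. -/
def free {k : ℕ} : GFml k → Finset (Fin k)
  | eq i j => {i, j}
  | edge i j => {i, j}
  | not φ => free φ
  | and φ ψ => free φ ∪ free ψ
  | ex i φ => (free φ).erase i

end GFml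

/-- The graph `F_i` obtained from the directed graph `F = (V, E)` by replacing
the vertex `v` with a clique of `i` new vertices: every ordered pair of distinct
new vertices is an edge, each edge `(v,w)` of `F` is replaced by the edges from
every new vertex to `w`, and each edge `(z,v)` by the edges from `z` to every
new vertex. -/
def blowup {V : Type} (E : V → V → Prop) (v : V) (i : ℕ) :
    ({x : V // x ≠ v} ⊕ Fin i) → ({x : V // x ≠ v} ⊕ Fin i) → Prop
  | Sum.inl x, Sum.inl y => E x.1 y.1
  | Sum.inl x, Sum.inr _ => E x.1 v
  | Sum.inr _, Sum.inl y => E v y.1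
  | Sum.inr a, Sum.inr b => a ≠ b

/-!
The Duplicator wins the `k`-pebble game on `F_m` and `F_n` whenever `k ≤ m, n`: she answers
a move outside the cliques by the same vertex, a move onto an already pebbled vertex by the
vertex carrying the corresponding pebble, and a move onto a fresh clique vertex by a clique
vertex free of the other `k - 1` pebbles. Such positions satisfy the same `k`-variable formulas.
Embedding `F_k` into `F_r` gives a winning position from any assignment, and sentences do not
depend on the assignment.
-/

namespace GFml

variable {k : ℕ} {V : Type} {E : V → V → Prop}

theorem sat_congr {φ : GFml k} {w w' : Fin k → V} (h : ∀ i ∈ φ.free, w i = w' i) :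
    Sat E φ w ↔ Sat E φ w' := by
  induction φ generalizing w w' with
  | eq i j | edge i j =>
    simp only [free, Finset.mem_insert, Finset.mem_singleton] at h
    simp only [Sat, h i (by simp), h j (by simp)]
  | not φ ih => exact not_congr (ih h)
  | and φ ψ ihφ ihψ =>
    simp only [free, Finset.mem_union] at h
    exact and_congr (ihφ fun i hi => h i (.inl hi)) (ihψ fun i hi => h i (.inr hi))
  | ex i φ ih =>
    refine exists_congr fun a => ih fun j hj => ?_
    by_cases hji : j = i
    · simp [hji]
    · simpa [Function.update_of_ne hji] using h j (Finset.mem_erase.2 ⟨hji, hj⟩)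

theorem sat_iff_of_free_eq_empty {φ : GFml k} (hφ : φ.free = ∅) (w w' : Fin k → V) :
    Sat E φ w ↔ Sat E φ w' :=
  sat_congr (by simp [hφ])

end GFml

theorem exists_forall_ne_inr {α : Type} {k n : ℕ} (hkn : k ≤ n) (f : Fin k → α ⊕ Fin n)
    (i : Fin k) : ∃ b, ∀ j ≠ i, f j ≠ Sum.inr b := by
  by_contra! h
  choose g hgi hg using h
  have hinj : Function.Injective fun b => (⟨g b, hgi b⟩ : {j // j ≠ i}) := fun b c hbc =>
    Sum.inr_injective <| (hg b).symm.trans <| (congrArg (f ∘ Subtype.val) hbc).trans (hg c)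
  have := Fintype.card_le_of_injective _ hinj
  rw [Fintype.card_fin, Fintype.card_subtype_compl, Fintype.card_fin, Fintype.card_unique] at this
  have := i.pos
  omega

section CliqueMatch

variable {W : Type} {k m n : ℕ}

/-- Winning positions of the Duplicator; equal `getLeft?` means that both pebbles lie on the
same vertex outside the cliques, or both lie inside them. -/
def CliqueMatch (w : Fin k → W ⊕ Fin m) (w' : Fin k → W ⊕ Fin n) : Prop :=
  (∀ i, (w i).getLeft? = (w' i).getLeft?) ∧ ∀ i j, w i = w j ↔ w' i = w' j

theorem CliqueMatch.symm {w : Fin k → W ⊕ Fin m} {w' : Fin k → W ⊕ Fin n}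
    (h : CliqueMatch w w') : CliqueMatch w' w :=
  ⟨fun i => (h.1 i).symm, fun i j => (h.2 i j).symm⟩

theorem cliqueMatch_map_castLE (hmn : m ≤ n) (w : Fin k → W ⊕ Fin m) :
    CliqueMatch w (Sum.map id (Fin.castLE hmn) ∘ w) := by
  refine ⟨fun i => by simp [Sum.getLeft?_map], fun i j => ?_⟩
  exact (Sum.map_injective.2 ⟨Function.injective_id, Fin.castLE_injective hmn⟩).eq_iff.symm

theorem CliqueMatch.update {w : Fin k → W ⊕ Fin m} {w' : Fin k → W ⊕ Fin n}
    (h : CliqueMatch w w') {i : Fin k} {a : W ⊕ Fin m} {a' : W ⊕ Fin n}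
    (ha : a.getLeft? = a'.getLeft?) (hmatch : ∀ j ≠ i, w j = a ↔ w' j = a') :
    CliqueMatch (Function.update w i a) (Function.update w' i a') := by
  refine ⟨fun j => ?_, fun j₁ j₂ => ?_⟩
  · rcases eq_or_ne j i with rfl | hj
    · simpa using ha
    · simpa [Function.update_of_ne hj] using h.1 j
  · by_cases h₁ : j₁ = i <;> by_cases h₂ : j₂ = i
    · simp [h₁, h₂]
    · simpa [h₁, Function.update_of_ne h₂, eq_comm] using hmatch j₂ h₂
    · simpa [h₂, Function.update_of_ne h₁] using hmatch j₁ h₁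
    · simpa [Function.update_of_ne h₁, Function.update_of_ne h₂] using h.2 j₁ j₂

theorem CliqueMatch.exists_update (hkn : k ≤ n) {w : Fin k → W ⊕ Fin m}
    {w' : Fin k → W ⊕ Fin n} (h : CliqueMatch w w') (i : Fin k) (a : W ⊕ Fin m) :
    ∃ a', CliqueMatch (Function.update w i a) (Function.update w' i a') := by
  by_cases hocc : ∃ j ≠ i, w j = a
  · obtain ⟨j₀, -, rfl⟩ := hocc
    exact ⟨w' j₀, h.update (h.1 j₀) fun j _ => h.2 j j₀⟩
  push Not at hocc
  suffices ∃ a', a.getLeft? = a'.getLeft? ∧ ∀ j ≠ i, w' j ≠ a' by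
    obtain ⟨a', ha, hfree⟩ := this
    exact ⟨a', h.update ha fun j hj => iff_of_false (hocc j hj) (hfree j hj)⟩
  rcases a with x | -
  · refine ⟨.inl x, rfl, fun j hj hwj => hocc j hj ?_⟩
    rw [← Sum.getLeft?_eq_some_iff, h.1 j, hwj, Sum.getLeft?_inl]
  · obtain ⟨b', hb'⟩ := exists_forall_ne_inr hkn w' i
    exact ⟨.inr b', rfl, hb'⟩

end CliqueMatch

section Blowup

variable {V : Type} (E : V → V → Prop) (v : V) {k m n : ℕ}

theorem blowup_iff_of_cliqueMatch {a b : {x // x ≠ v} ⊕ Fin m} {a' b' : {x // x ≠ v} ⊕ Fin n}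
    (ha : a.getLeft? = a'.getLeft?) (hb : b.getLeft? = b'.getLeft?) (hab : a = b ↔ a' = b') :
    blowup E v m a b ↔ blowup E v n a' b' := by
  cases a <;> cases a' <;> cases b <;> cases b' <;> simp_all [blowup]

theorem sat_blowup_iff_of_cliqueMatch (hkm : k ≤ m) (hkn : k ≤ n) (φ : GFml k)
    {w : Fin k → {x // x ≠ v} ⊕ Fin m} {w' : Fin k → {x // x ≠ v} ⊕ Fin n}
    (h : CliqueMatch w w') :
    GFml.Sat (blowup E v m) φ w ↔ GFml.Sat (blowup E v n) φ w' := by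
  induction φ generalizing w w' with
  | eq i j => exact h.2 i j
  | edge i j => exact blowup_iff_of_cliqueMatch E v (h.1 i) (h.1 j) (h.2 i j)
  | not φ ih => exact not_congr (ih h)
  | and φ ψ ihφ ihψ => exact and_congr (ihφ h) (ihψ h)
  | ex i φ ih =>
    constructor
    · rintro ⟨a, ha⟩
      obtain ⟨a', h'⟩ := h.exists_update hkn i a
      exact ⟨a', (ih h').1 ha⟩
    · rintro ⟨a', ha'⟩
      obtain ⟨a, h'⟩ := h.symm.exists_update hkm i a'
      exact ⟨a, (ih h'.symm).2 ha'⟩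

end Blowup

theorem clique_replacement_general {V : Type} (E : V → V → Prop) (v : V)
    (k r : ℕ) (hkr : k < r) :
    (∀ (φ : GFml k) (w : Fin k → {x : V // x ≠ v}),
        GFml.Sat (blowup E v k) φ (fun i => Sum.inl (w i)) ↔
          GFml.Sat (blowup E v r) φ (fun i => Sum.inl (w i))) ∧
    (∀ φ : GFml k, φ.free = ∅ →
        ∀ (w : Fin k → ({x : V // x ≠ v} ⊕ Fin k))
          (w' : Fin k → ({x : V // x ≠ v} ⊕ Fin r)),
          GFml.Sat (blowup E v k) φ w ↔ GFml.Sat (blowup E v r) φ w') := by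
  have sat_iff_map_castLE (φ : GFml k) (w : Fin k → {x // x ≠ v} ⊕ Fin k) :
      GFml.Sat (blowup E v k) φ w ↔
        GFml.Sat (blowup E v r) φ (Sum.map id (Fin.castLE hkr.le) ∘ w) :=
    sat_blowup_iff_of_cliqueMatch E v le_rfl hkr.le φ (cliqueMatch_map_castLE hkr.le w)
  refine ⟨fun φ w => sat_iff_map_castLE φ _, fun φ hφ w w' => ?_⟩
  rw [sat_iff_map_castLE, GFml.sat_iff_of_free_eq_empty hφ]

/-- For `1 ≤ k < r`, every `k`-variable first-order formula evaluated at
parameters other than `v` (common to `F_k` and `F_r`) has the same truth value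
in `F_k` and in `F_r`; in particular `F_k` and `F_r` satisfy the same
`k`-variable first-order sentences. -/
theorem clique_replacement {V : Type} [Fintype V] (E : V → V → Prop) (v : V)
    (k r : ℕ) (hk : 1 ≤ k) (hkr : k < r) :
    (∀ (φ : GFml k) (w : Fin k → {x : V // x ≠ v}),
        GFml.Sat (blowup E v k) φ (fun i => Sum.inl (w i)) ↔
          GFml.Sat (blowup E v r) φ (fun i => Sum.inl (w i))) ∧
    (∀ φ : GFml k, φ.free = ∅ →
        ∀ (w : Fin k → ({x : V // x ≠ v} ⊕ Fin k))
          (w' : Fin k → ({x : V // x ≠ v} ⊕ Fin r)),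
          GFml.Sat (blowup E v k) φ w ↔ GFml.Sat (blowup E v r) φ w') :=
  clique_replacement_general E v k r hkr
end

section
/- Let F be a finite directed graph and w₁,…,w_t distinct vertices of F. For a vector s = (s₁,…,s_t) of positive integers, let F_s denote the graph obtained from F by simultaneously replacing each w_j with a clique of s_j new vertices, each edge into or out of w_j being replaced by the corresponding edges into or out of every new vertex of that clique. If k ≤ s_j and k ≤ s′_j for every j = 1,…,t, then for every k-variable first-order formula φ(x₁,…,x_l) in the language of one binary relation and all elements a₁,…,a_l of F not among w₁,…,w_t, F_s ⊨ φ(a₁,…,a_l) if and only if F_{s′} ⊨ φ(a₁,…,a_l). -/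
/-- The graph `F_s` obtained from the directed graph `F = (V, E)` by
simultaneously replacing each vertex `w j` with a clique of `s j` new vertices;
each edge into or out of `w j` is replaced by the corresponding edges into or
out of every new vertex of that clique, and every ordered pair of distinct new
vertices of the same clique is an edge. -/
def mblowup {V : Type} (E : V → V → Prop) {t : ℕ} (w : Fin t → V)
    (s : Fin t → ℕ) :
    ({x : V // ∀ j, x ≠ w j} ⊕ (Σ j : Fin t, Fin (s j))) →
    ({x : V // ∀ j, x ≠ w j} ⊕ (Σ j : Fin t, Fin (s j))) → Prop
  | Sum.inl x, Sum.inl y => E x.1 y.1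
  | Sum.inl x, Sum.inr q => E x.1 (w q.1)
  | Sum.inr q, Sum.inl y => E (w q.1) y.1
  | Sum.inr q, Sum.inr q' => if q.1 = q'.1 then q ≠ q' else E (w q.1) (w q'.1)

open Finset

namespace GFml

structure IsBackAndForth {k : ℕ} {V W : Type} (E : V → V → Prop) (F : W → W → Prop)
    (R : (Fin k → V) → (Fin k → W) → Prop) : Prop where
  eq_iff : ∀ {v v'}, R v v' → ∀ i j, v i = v j ↔ v' i = v' j
  edge_iff : ∀ {v v'}, R v v' → ∀ i j, E (v i) (v j) ↔ F (v' i) (v' j)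
  forth : ∀ {v v'}, R v v' → ∀ i a, ∃ b, R (Function.update v i a) (Function.update v' i b)
  back : ∀ {v v'}, R v v' → ∀ i b, ∃ a, R (Function.update v i a) (Function.update v' i b)

theorem IsBackAndForth.sat_iff {k : ℕ} {V W : Type} {E : V → V → Prop} {F : W → W → Prop}
    {R : (Fin k → V) → (Fin k → W) → Prop} (hR : IsBackAndForth E F R) (φ : GFml k) :
    ∀ {v v'}, R v v' → (Sat E φ v ↔ Sat F φ v') := by
  induction φ with
  | eq i j => exact fun h => hR.eq_iff h i j
  | edge i j => exact fun h => hR.edge_iff h i j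
  | not φ ih => exact fun h => not_congr (ih h)
  | and φ ψ ihφ ihψ => exact fun h => and_congr (ihφ h) (ihψ h)
  | ex i φ ih =>
    intro v v' h
    constructor
    · rintro ⟨a, ha⟩
      obtain ⟨b, hb⟩ := hR.forth h i a
      exact ⟨b, (ih hb).1 ha⟩
    · rintro ⟨b, hb⟩
      obtain ⟨a, ha⟩ := hR.back h i b
      exact ⟨a, (ih ha).2 hb⟩

end GFml

theorem Function.update_eq_update_iff_of_eq_iff {ι α β : Type*} [DecidableEq ι]
    {v : ι → α} {v' : ι → β} (h : ∀ i j, v i = v j ↔ v' i = v' j) (i : ι) {a : α} {a' : β}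
    (ha : ∀ j, j ≠ i → (a = v j ↔ a' = v' j)) (j j' : ι) :
    Function.update v i a j = Function.update v i a j' ↔
      Function.update v' i a' j = Function.update v' i a' j' := by
  simp only [Function.update_apply]
  split_ifs with hj hj' hj'
  · exact iff_of_true rfl rfl
  · exact ha j' hj'
  · exact eq_comm.trans ((ha j hj).trans eq_comm)
  · exact h j j'

theorem Finset.exists_forall_ne_of_card_lt {ι α β : Type*} [Fintype α]
    {f : α → β} (hf : Function.Injective f) (g : ι → β) (S : Finset ι)
    (hS : #S < Fintype.card α) : ∃ a, ∀ i ∈ S, g i ≠ f a := by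
  classical
  by_contra! hcover
  have hsub : univ.image f ⊆ S.image g := by
    intro b hb
    obtain ⟨a, -, rfl⟩ := mem_image.1 hb
    obtain ⟨i, hi, hia⟩ := hcover a
    exact mem_image.2 ⟨i, hi, hia⟩
  have := (card_le_card hsub).trans card_image_le
  rw [card_image_of_injective _ hf, card_univ] at this
  omega

section Blowup

variable {V : Type} {t : ℕ} {w : Fin t → V}

abbrev BlowupVertex (V : Type) {t : ℕ} (w : Fin t → V) (s : Fin t → ℕ) : Type :=
  {x : V // ∀ j, x ≠ w j} ⊕ (Σ j : Fin t, Fin (s j))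

def blowupLabel {s : Fin t → ℕ} : BlowupVertex V w s → {x : V // ∀ j, x ≠ w j} ⊕ Fin t :=
  Sum.map id Sigma.fst

theorem eq_inl_of_blowupLabel_eq_inl {s : Fin t → ℕ} {a : BlowupVertex V w s}
    {x : {x : V // ∀ j, x ≠ w j}} (h : blowupLabel a = Sum.inl x) : a = Sum.inl x := by
  rcases a with y | q <;> simp_all [blowupLabel]

theorem mblowup_iff_of_blowupLabel_eq (E : V → V → Prop) {s s' : Fin t → ℕ}
    {a b : BlowupVertex V w s} {a' b' : BlowupVertex V w s'}
    (ha : blowupLabel a = blowupLabel a') (hb : blowupLabel b = blowupLabel b')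
    (hab : a = b ↔ a' = b') : mblowup E w s a b ↔ mblowup E w s' a' b' := by
  rcases a with x | ⟨i, p⟩ <;> rcases a' with x' | ⟨i', p'⟩ <;>
    rcases b with y | ⟨j, q⟩ <;> rcases b' with y' | ⟨j', q'⟩ <;>
    simp_all [blowupLabel, mblowup]

def BlowupMatched {k : ℕ} {s s' : Fin t → ℕ} (v : Fin k → BlowupVertex V w s)
    (v' : Fin k → BlowupVertex V w s') : Prop :=
  (∀ i, blowupLabel (v i) = blowupLabel (v' i)) ∧ ∀ i j, v i = v j ↔ v' i = v' j

namespace BlowupMatched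

variable {k : ℕ} {s s' : Fin t → ℕ} {v : Fin k → BlowupVertex V w s}
  {v' : Fin k → BlowupVertex V w s'}

theorem symm (h : BlowupMatched v v') : BlowupMatched v' v :=
  ⟨fun i => (h.1 i).symm, fun i j => (h.2 i j).symm⟩

theorem update (h : BlowupMatched v v') (i : Fin k) {a : BlowupVertex V w s}
    {a' : BlowupVertex V w s'} (ha : blowupLabel a = blowupLabel a')
    (hfresh : ∀ j, j ≠ i → (a = v j ↔ a' = v' j)) :
    BlowupMatched (Function.update v i a) (Function.update v' i a') := by
  refine ⟨fun j => ?_, Function.update_eq_update_iff_of_eq_iff h.2 i hfresh⟩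
  rcases eq_or_ne j i with rfl | hj
  · simpa using ha
  · simpa [Function.update_of_ne hj] using h.1 j

theorem exists_update (hks' : ∀ j, k ≤ s' j) (h : BlowupMatched v v') (i : Fin k)
    (a : BlowupVertex V w s) :
    ∃ a', BlowupMatched (Function.update v i a) (Function.update v' i a') := by
  by_cases hrep : ∃ j, j ≠ i ∧ v j = a
  · obtain ⟨j, -, rfl⟩ := hrep
    exact ⟨v' j, h.update i (h.1 j) fun l _ => h.2 j l⟩
  push Not at hrep
  suffices ∃ a', blowupLabel a = blowupLabel a' ∧ ∀ j, j ≠ i → a' ≠ v' j by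
    obtain ⟨a', ha', hfresh⟩ := this
    exact ⟨a', h.update i ha' fun j hj =>
      iff_of_false (fun e => hrep j hj e.symm) (hfresh j hj)⟩
  rcases a with x | ⟨c, q⟩
  · refine ⟨Sum.inl x, rfl, fun j hj e => hrep j hj ?_⟩
    exact eq_inl_of_blowupLabel_eq_inl ((h.1 j).trans (congrArg blowupLabel e).symm)
  · have hcard : #(univ.erase i) < Fintype.card (Fin (s' c)) := by
      rw [card_erase_of_mem (mem_univ i), card_univ, Fintype.card_fin, Fintype.card_fin]
      have := hks' c
      have := i.pos
      omega
    obtain ⟨q', hq'⟩ := exists_forall_ne_of_card_lt (f := fun q' => (Sum.inr ⟨c, q'⟩ :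
      BlowupVertex V w s')) (by intro p p' e; simpa using e) v' _ hcard
    exact ⟨Sum.inr ⟨c, q'⟩, rfl, fun j hj e => hq' j (mem_erase.2 ⟨hj, mem_univ j⟩) e.symm⟩

end BlowupMatched

theorem isBackAndForth_blowupMatched (E : V → V → Prop) {k : ℕ} {s s' : Fin t → ℕ}
    (hks : ∀ j, k ≤ s j) (hks' : ∀ j, k ≤ s' j) :
    GFml.IsBackAndForth (mblowup E w s) (mblowup E w s') (BlowupMatched (k := k)) where
  eq_iff h := h.2
  edge_iff h i j := mblowup_iff_of_blowupLabel_eq E (h.1 i) (h.1 j) (h.2 i j)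
  forth h := h.exists_update hks'
  back h i a' := by
    obtain ⟨a, ha⟩ := h.symm.exists_update hks i a'
    exact ⟨a, ha.symm⟩

end Blowup

theorem multi_clique_replacement_general {V : Type} (E : V → V → Prop)
    (t : ℕ) (w : Fin t → V)
    (s s' : Fin t → ℕ)
    (k : ℕ) (hks : ∀ j, k ≤ s j) (hks' : ∀ j, k ≤ s' j) :
    ∀ (φ : GFml k) (w0 : Fin k → {x : V // ∀ j, x ≠ w j}),
      GFml.Sat (mblowup E w s) φ (fun i => Sum.inl (w0 i)) ↔
        GFml.Sat (mblowup E w s') φ (fun i => Sum.inl (w0 i)) := by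
  intro φ w0
  exact (isBackAndForth_blowupMatched E hks hks').sat_iff φ
    ⟨fun _ => rfl, fun _ _ => by simp only [Sum.inl.injEq]⟩

/-- If `k ≤ s j` and `k ≤ s' j` for every `j`, then every `k`-variable
first-order formula evaluated at parameters not among the `w j` (common to
`F_s` and `F_{s'}`) has the same truth value in `F_s` and in `F_{s'}`. -/
theorem multi_clique_replacement {V : Type} [Fintype V] (E : V → V → Prop)
    (t : ℕ) (w : Fin t → V) (hw : Function.Injective w)
    (s s' : Fin t → ℕ) (hs0 : ∀ j, 0 < s j) (hs'0 : ∀ j, 0 < s' j)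
    (k : ℕ) (hks : ∀ j, k ≤ s j) (hks' : ∀ j, k ≤ s' j) :
    ∀ (φ : GFml k) (w0 : Fin k → {x : V // ∀ j, x ≠ w j}),
      GFml.Sat (mblowup E w s) φ (fun i => Sum.inl (w0 i)) ↔
        GFml.Sat (mblowup E w s') φ (fun i => Sum.inl (w0 i)) :=
  multi_clique_replacement_general E t w s s' k hks hks'
end

section
/- If k′ > k ≥ 3 and E is a k′-good envelope for a hypergraph H, then E is a k-good envelope for H. -/
/-! STATEMENT 9.  A k'-good envelope is k-good for k < k'. -/

namespace McColm

/-- A (finite) hypergraph: a finite set of nodes together with a set of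
hyperedges, each hyperedge being a multiset of nodes. -/
structure Hypergraph (α : Type) where
  nodes : Finset α
  edges : Set (Multiset α)
  edges_sub : ∀ e ∈ edges, ∀ a ∈ e, a ∈ nodes

/-- A finite structure with one binary relation `P`, together with a
projection function (the data of an envelope). -/
structure PStruct (α : Type) where
  carrier : Finset α
  P : α → α → Prop
  proj : α → α

variable {α : Type}

/-- The vertices of an envelope: the elements of `|E| − |H|`. -/
def verts (H : Hypergraph α) (E : PStruct α) : Set α :=
  (E.carrier : Set α) \ (H.nodes : Set α)

/-- `E` is an envelope for `H`:  `|H| ⊆ |E|` and `P` is the identity on `|H|`;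
`P` only relates elements of `|E|`; `P` is irreflexive and symmetric on the
vertices `|E| − |H|`; every vertex is `P`-related to a unique node, its
projection `F x = E.proj x`; and no node is `P`-related to a vertex. -/
def IsEnvelope (H : Hypergraph α) (E : PStruct α) : Prop :=
  (H.nodes ⊆ E.carrier) ∧
  (∀ x y, E.P x y → x ∈ E.carrier ∧ y ∈ E.carrier) ∧
  (∀ a ∈ H.nodes, ∀ b ∈ H.nodes, (E.P a b ↔ a = b)) ∧
  (∀ x ∈ verts H E, ¬ E.P x x) ∧
  (∀ x ∈ verts H E, ∀ y ∈ verts H E, E.P x y → E.P y x) ∧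
  (∀ x ∈ verts H E, E.proj x ∈ H.nodes ∧ E.P x (E.proj x) ∧
      ∀ a ∈ H.nodes, E.P x a → a = E.proj x) ∧
  (∀ a ∈ H.nodes, ∀ x ∈ verts H E, ¬ E.P a x)

/-- Adjacency in the graph `G_E` formed by `P` on the vertices. -/
def Adj (H : Hypergraph α) (E : PStruct α) (x y : α) : Prop :=
  x ∈ verts H E ∧ y ∈ verts H E ∧ x ≠ y ∧ E.P x y

/-- A `k`-clique: a clique `X` of `G_E` with `F(X) ∈ HE(H)` and `|X| < k`. -/
def IsKClique (H : Hypergraph α) (E : PStruct α) (k : ℕ) (X : Finset α) : Prop :=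
  (↑X ⊆ verts H E) ∧ (∀ x ∈ X, ∀ y ∈ X, x ≠ y → E.P x y) ∧
  (X.val.map E.proj ∈ H.edges) ∧ X.card < k

/-- A `k`-plebeian vertex: one belonging to no `k`-clique. -/
def Plebeian (H : Hypergraph α) (E : PStruct α) (k : ℕ) (x : α) : Prop :=
  x ∈ verts H E ∧ ∀ X : Finset α, IsKClique H E k X → x ∉ X

/-- The `k`-closure `C_k(X)`: the union of `X` with all `k`-cliques
intersecting `X`. -/
def Ck (H : Hypergraph α) (E : PStruct α) (k : ℕ) (X : Set α) : Set α :=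
  X ∪ {y | ∃ C : Finset α, IsKClique H E k C ∧ (∃ z ∈ C, z ∈ X) ∧ y ∈ C}

/-- Condition (G0): all `k`-cliques are pairwise disjoint. -/
def G0cond (H : Hypergraph α) (E : PStruct α) (k : ℕ) : Prop :=
  ∀ C D : Finset α, IsKClique H E k C → IsKClique H E k D → C ≠ D → Disjoint C D

/-- Condition (G1): for every `X ⊆ |E|` with `|X| < k`, every node `a` and
every `Y ⊆ C_k(X)` including no `k`-clique, there is a `k`-plebeian vertex
`z ∈ F⁻¹(a) − X` adjacent in `G_E` to every vertex of `Y` and to no vertex of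
`C_k(X) − Y`. -/
def G1cond (H : Hypergraph α) (E : PStruct α) (k : ℕ) : Prop :=
  ∀ X : Finset α, ↑X ⊆ (E.carrier : Set α) → X.card < k →
    ∀ a ∈ H.nodes, ∀ Y : Set α, Y ⊆ Ck H E k ↑X →
      (∀ C : Finset α, IsKClique H E k C → ¬ (↑C ⊆ Y)) →
      ∃ z, Plebeian H E k z ∧ E.proj z = a ∧ z ∉ X ∧
        (∀ y ∈ Y, y ∈ verts H E → Adj H E z y) ∧
        (∀ y ∈ Ck H E k ↑X, y ∈ verts H E → y ∉ Y → ¬ Adj H E z y)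

/-- Condition (G2): for every `X ⊆ |E|` with `|X| < k`, every tuple
`(a₁,…,a_l)` of nodes with `l < k` whose multiset is a hyperedge, and every
admissible adjacency pattern `R ⊆ C_k(X) × {1,…,l}` (no element of `C_k(X)` is
`R`-related to all indices, and no index is `R`-related to all vertices of a
`k`-clique contained in `C_k(X)`), there are distinct vertices `y₁,…,y_l`
forming a clique disjoint from `X`, with `F(y_m) = a_m` and realizing exactly
the pattern `R` on `C_k(X)`. -/
def G2cond (H : Hypergraph α) (E : PStruct α) (k : ℕ) : Prop :=
  ∀ X : Finset α, ↑X ⊆ (E.carrier : Set α) → X.card < k →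
    ∀ l : ℕ, l < k → ∀ a : Fin l → α, (∀ m, a m ∈ H.nodes) →
      (↑(List.ofFn a) : Multiset α) ∈ H.edges →
      ∀ R : Set (α × Fin l), (∀ p ∈ R, p.1 ∈ Ck H E k ↑X) →
        (∀ x ∈ Ck H E k ↑X, ¬ ∀ m : Fin l, (x, m) ∈ R) →
        (∀ m : Fin l, ∀ C : Finset α, IsKClique H E k C → ↑C ⊆ Ck H E k ↑X →
          ¬ ∀ y ∈ C, (y, m) ∈ R) →
        ∃ y : Fin l → α, Function.Injective y ∧ (∀ m, y m ∈ verts H E) ∧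
          (∀ m, E.proj (y m) = a m) ∧
          (∀ m m' : Fin l, m ≠ m' → E.P (y m) (y m')) ∧
          (∀ m, y m ∉ X) ∧
          (∀ x ∈ Ck H E k ↑X, ∀ m : Fin l, (E.P x (y m) ↔ (x, m) ∈ R))

/-- `E` is a `k`-good envelope for `H`. -/
def KGoodEnvelope (H : Hypergraph α) (k : ℕ) (E : PStruct α) : Prop :=
  IsEnvelope H E ∧ G0cond H E k ∧ G1cond H E k ∧ G2cond H E k

end McColm

/-!
Every `k`-clique is a `k'`-clique, so `C_k(X) ⊆ C_{k'}(X)` and `k'`-plebeian vertices are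
`k`-plebeian; (G0) and the conclusions of (G1), (G2) therefore pass from `k'` to `k`. The only
point is the hypotheses about cliques inside `C_k(X)`: a `k'`-clique `C ⊆ C_k(X)` with `|X| < k`
is already a `k`-clique, since if `|C| ≥ k` then `C ⊄ X`, so `C` meets a `k`-clique `D`, which
by (G0) for `k'` must be `C` itself, contradicting `|D| < k`.
-/

namespace McColm

variable {α : Type} {H : Hypergraph α} {E : PStruct α} {k k' : ℕ}

lemma IsKClique.mono (hkk' : k ≤ k') {C : Finset α} (hC : IsKClique H E k C) :
    IsKClique H E k' C :=
  ⟨hC.1, hC.2.1, hC.2.2.1, hC.2.2.2.trans_le hkk'⟩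

lemma Ck_mono (hkk' : k ≤ k') (X : Set α) : Ck H E k X ⊆ Ck H E k' X := by
  rintro y (hy | ⟨C, hC, hCX, hyC⟩)
  · exact Or.inl hy
  · exact Or.inr ⟨C, hC.mono hkk', hCX, hyC⟩

lemma Plebeian.anti (hkk' : k ≤ k') {z : α} (hz : Plebeian H E k' z) : Plebeian H E k z :=
  ⟨hz.1, fun C hC => hz.2 C (hC.mono hkk')⟩

lemma nonempty_of_mem_Ck {X : Set α} {x : α} (hx : x ∈ Ck H E k X) : X.Nonempty := by
  rcases hx with hx | ⟨C, -, ⟨z, -, hz⟩, -⟩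
  exacts [⟨x, hx⟩, ⟨z, hz⟩]

lemma IsKClique.of_subset_Ck (hkk' : k < k') (hG0 : G0cond H E k') {X C : Finset α}
    (hX : X.card < k) (hC : IsKClique H E k' C) (hCX : ↑C ⊆ Ck H E k ↑X) :
    IsKClique H E k C := by
  refine ⟨hC.1, hC.2.1, hC.2.2.1, ?_⟩
  by_contra! hcard
  obtain ⟨y, hyC, hyX⟩ : ∃ y ∈ C, y ∉ X :=
    Finset.not_subset.mp fun h => (Finset.card_le_card h).not_gt (by omega)
  obtain ⟨D, hD, -, hyD⟩ := (hCX hyC).resolve_left hyX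
  obtain rfl | hCD := eq_or_ne C D
  · exact hcard.not_gt hD.2.2.2
  · exact Finset.disjoint_left.mp (hG0 C D hC (hD.mono hkk'.le) hCD) hyC hyD

lemma G0cond.anti (hkk' : k ≤ k') (hG0 : G0cond H E k') : G0cond H E k :=
  fun C D hC hD => hG0 C D (hC.mono hkk') (hD.mono hkk')

lemma G1cond.of_lt (hkk' : k < k') (hG0 : G0cond H E k') (hG1 : G1cond H E k') :
    G1cond H E k := by
  intro X hXE hX a ha Y hY hYfree
  have hYfree' : ∀ C, IsKClique H E k' C → ¬ ↑C ⊆ Y := fun C hC hCY =>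
    hYfree C (hC.of_subset_Ck hkk' hG0 hX (hCY.trans hY)) hCY
  obtain ⟨z, hz, hzproj, hzX, hadj, hnadj⟩ :=
    hG1 X hXE (hX.trans hkk') a ha Y (hY.trans (Ck_mono hkk'.le _)) hYfree'
  exact ⟨z, hz.anti hkk'.le, hzproj, hzX, hadj,
    fun y hy => hnadj y (Ck_mono hkk'.le _ hy)⟩

/-- For `l = 0` the hypothesis `hRfull` forces `X = ∅`, hence `C_{k'}(X) = ∅`. -/
lemma not_forall_mem_pattern_of_subset_Ck {X : Set α} {l : ℕ}
    {R : Set (α × Fin l)} (hR : ∀ p ∈ R, p.1 ∈ Ck H E k X)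
    (hRfull : ∀ x ∈ Ck H E k X, ¬ ∀ m, (x, m) ∈ R) :
    ∀ x ∈ Ck H E k' X, ¬ ∀ m, (x, m) ∈ R := by
  intro x hx hxR
  rcases Nat.eq_zero_or_pos l with rfl | hl
  · obtain ⟨z, hz⟩ := nonempty_of_mem_Ck hx
    exact hRfull z (Or.inl hz) finZeroElim
  · exact hRfull x (hR _ (hxR ⟨0, hl⟩)) hxR

lemma G2cond.of_lt (hkk' : k < k') (hG0 : G0cond H E k') (hG2 : G2cond H E k') :
    G2cond H E k := by
  intro X hXE hX l hl a ha hedge R hR hRfull hRclique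
  have hRclique' : ∀ m C, IsKClique H E k' C → ↑C ⊆ Ck H E k' ↑X → ¬ ∀ y ∈ C, (y, m) ∈ R := by
    intro m C hC _ hCR
    have hCX : ↑C ⊆ Ck H E k ↑X := fun y hy => hR (y, m) (hCR y hy)
    exact hRclique m C (hC.of_subset_Ck hkk' hG0 hX hCX) hCX hCR
  obtain ⟨y, hinj, hverts, hproj, hclique, hyX, hpat⟩ :=
    hG2 X hXE (hX.trans hkk') l (hl.trans hkk') a ha hedge R
      (fun p hp => Ck_mono hkk'.le _ (hR p hp))
      (not_forall_mem_pattern_of_subset_Ck hR hRfull) hRclique'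
  exact ⟨y, hinj, hverts, hproj, hclique, hyX, fun x hx => hpat x (Ck_mono hkk'.le _ hx)⟩

end McColm

theorem kGood_of_kGood_gt_general {α : Type} (H : McColm.Hypergraph α)
    (k k' : ℕ) (hkk' : k < k') (E : McColm.PStruct α)
    (hE : McColm.KGoodEnvelope H k' E) :
    McColm.KGoodEnvelope H k E := by
  obtain ⟨henv, hG0, hG1, hG2⟩ := hE
  exact ⟨henv, hG0.anti hkk'.le, hG1.of_lt hkk' hG0, hG2.of_lt hkk' hG0⟩

/-- If `k' > k ≥ 3` and `E` is a `k'`-good envelope for `H`, then `E` is a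
`k`-good envelope for `H`. -/
theorem kGood_of_kGood_gt {α : Type} (H : McColm.Hypergraph α)
    (k k' : ℕ) (hk : 3 ≤ k) (hkk' : k < k') (E : McColm.PStruct α)
    (hE : McColm.KGoodEnvelope H k' E) :
    McColm.KGoodEnvelope H k E :=
  kGood_of_kGood_gt_general H k k' hkk' E hE
end

section
/- Let E and E′ be k-good envelopes for a hypergraph H and let η be a k-nice partial isomorphism from E to E′, with η* a k-correct extension of η whose domain is C_k(Dom(η)). Then: (i) η* is k-nice; (ii) η⁻¹ is k-nice, and (η*)⁻¹ is a k-correct extension of η⁻¹ with domain C_k(Range(η)); (iii) Range(η*) = C_k(Range(η)); (iv) η* maps every k-clique contained in C_k(Dom(η)) bijectively onto a k-clique of the same size; and (v) distinct k-cliques contained in C_k(Dom(η)) are mapped by η* to distinct k-cliques. -/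
namespace McColm

variable {α : Type}

/-- The domain of a partial map represented as a set of pairs. -/
def PDom (r : Set (α × α)) : Set α := {x | ∃ y, (x, y) ∈ r}

/-- The range of a partial map represented as a set of pairs. -/
def PRan (r : Set (α × α)) : Set α := {y | ∃ x, (x, y) ∈ r}

/-- The inverse of a partial map represented as a set of pairs. -/
def PInv (r : Set (α × α)) : Set (α × α) := {p | (p.2, p.1) ∈ r}

/-- `r` is (the graph of) a partial isomorphism from the `{P}`-structure `E`
to the `{P}`-structure `E'`: a partial injective map between the carriers that
preserves and reflects `P`. -/
def IsPIso (E E' : PStruct α) (r : Set (α × α)) : Prop :=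
  (∀ p ∈ r, p.1 ∈ E.carrier ∧ p.2 ∈ E'.carrier) ∧
  (∀ p ∈ r, ∀ q ∈ r, (p.1 = q.1 ↔ p.2 = q.2)) ∧
  (∀ p ∈ r, ∀ q ∈ r, (E.P p.1 q.1 ↔ E'.P p.2 q.2))

/-- A partial isomorphism `η` from `E` to `E'` is `k`-correct if it fixes
nodes, maps vertices to vertices with the same projection, preserves and
reflects `k`-plebeianness, and maps members of `k`-cliques to members of
`k`-cliques with the same projection multiset. -/
def KCorrect (H : Hypergraph α) (E E' : PStruct α) (k : ℕ)
    (r : Set (α × α)) : Prop :=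
  IsPIso E E' r ∧
  (∀ p ∈ r, p.1 ∈ H.nodes → p.2 = p.1) ∧
  (∀ p ∈ r, p.1 ∈ verts H E → p.2 ∈ verts H E' ∧ E'.proj p.2 = E.proj p.1) ∧
  (∀ p ∈ r, (Plebeian H E k p.1 ↔ Plebeian H E' k p.2)) ∧
  (∀ p ∈ r, ∀ X : Finset α, IsKClique H E k X → p.1 ∈ X →
    ∃ X' : Finset α, IsKClique H E' k X' ∧ p.2 ∈ X' ∧
      X'.val.map E'.proj = X.val.map E.proj)

/-- A `k`-correct partial isomorphism is `k`-nice if it extends to a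
`k`-correct partial isomorphism whose domain is the `k`-closure of its
domain. -/
def KNice (H : Hypergraph α) (E E' : PStruct α) (k : ℕ)
    (r : Set (α × α)) : Prop :=
  KCorrect H E E' k r ∧
  ∃ s : Set (α × α), r ⊆ s ∧ KCorrect H E E' k s ∧ PDom s = Ck H E k (PDom r)

end McColm

/-!
A k-correct map sends every k-clique inside its domain bijectively onto a k-clique with the
same projections. Since k-cliques of a k-good envelope are pairwise disjoint (G0), a k-clique
of `E'` meeting that image is the image itself; this is what makes the inverse of a k-correct
map k-correct, and what identifies the range of `η*` with `C_k(Range η)`. Disjointness in `E`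
also makes `C_k` idempotent, so `η*` is its own witness of niceness.
-/

namespace McColm

variable {α : Type} {H : Hypergraph α} {E E' : PStruct α} {k : ℕ}

lemma PInv_mono {r s : Set (α × α)} (h : r ⊆ s) : PInv r ⊆ PInv s := fun _ hp => h hp

section PIso

variable {t : Set (α × α)}

lemma IsPIso.eq_of_mem_left (ht : IsPIso E E' t) {x y y' : α} (h : (x, y) ∈ t)
    (h' : (x, y') ∈ t) : y = y' :=
  (ht.2.1 _ h _ h').mp rfl

lemma IsPIso.eq_of_mem_right (ht : IsPIso E E' t) {x x' y : α} (h : (x, y) ∈ t)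
    (h' : (x', y) ∈ t) : x = x' :=
  (ht.2.1 _ h _ h').mpr rfl

lemma IsPIso.pinv (ht : IsPIso E E' t) : IsPIso E' E (PInv t) :=
  ⟨fun _ hp => (ht.1 _ hp).symm, fun _ hp _ hq => (ht.2.1 _ hp _ hq).symm,
    fun _ hp _ hq => (ht.2.2 _ hp _ hq).symm⟩

lemma IsPIso.eq_of_image_eq (ht : IsPIso E E' t) {C D : Finset α}
    (hC : ↑C ⊆ PDom t) (hD : ↑D ⊆ PDom t)
    (h : {y | ∃ x ∈ C, (x, y) ∈ t} = {y | ∃ x ∈ D, (x, y) ∈ t}) : C = D := by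
  have key : ∀ C D : Finset α, ↑C ⊆ PDom t →
      {y | ∃ x ∈ C, (x, y) ∈ t} = {y | ∃ x ∈ D, (x, y) ∈ t} → C ⊆ D := by
    intro C D hC h x hx
    obtain ⟨y, hxy⟩ := hC hx
    obtain ⟨x', hx'D, hx'y⟩ : y ∈ {y | ∃ x ∈ D, (x, y) ∈ t} := h ▸ ⟨x, hx, hxy⟩
    exact ht.eq_of_mem_right hxy hx'y ▸ hx'D
  exact (key C D hC h).antisymm (key D C hD h.symm)

end PIso

lemma G0cond.eq_of_mem (hG0 : G0cond H E k) {C D : Finset α} (hC : IsKClique H E k C)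
    (hD : IsKClique H E k D) {x : α} (hxC : x ∈ C) (hxD : x ∈ D) : C = D := by
  by_contra hne
  exact Finset.disjoint_left.mp (hG0 C D hC hD hne) hxC hxD

lemma exists_clique_of_not_plebeian {x : α} (hx : x ∈ verts H E)
    (h : ¬ Plebeian H E k x) : ∃ X : Finset α, IsKClique H E k X ∧ x ∈ X := by
  by_contra hc
  exact h ⟨hx, fun X hX hxX => hc ⟨X, hX, hxX⟩⟩

section Closure

lemma subset_Ck {X : Set α} : X ⊆ Ck H E k X := fun _ hy => Or.inl hy

lemma IsKClique.subset_Ck {X : Set α} {C : Finset α} (hC : IsKClique H E k C)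
    (hmeet : ∃ z ∈ C, z ∈ X) : ↑C ⊆ Ck H E k X := fun _ hy =>
  Or.inr ⟨C, hC, hmeet, hy⟩

lemma Ck_Ck (hG0 : G0cond H E k) (X : Set α) : Ck H E k (Ck H E k X) = Ck H E k X := by
  refine Set.Subset.antisymm ?_ subset_Ck
  rintro y (hy | ⟨C, hC, ⟨z, hzC, hz | ⟨D, hD, hmeet, hzD⟩⟩, hyC⟩)
  · exact hy
  · exact hC.subset_Ck ⟨z, hzC, hz⟩ hyC
  · exact hD.subset_Ck hmeet (hG0.eq_of_mem hC hD hzC hzD ▸ hyC)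

end Closure

section Correct

variable {t : Set (α × α)}

lemma KCorrect.mem_verts_of_mem_verts (ht : KCorrect H E E' k t) {x y : α}
    (hxy : (x, y) ∈ t) (hy : y ∈ verts H E') : x ∈ verts H E := by
  refine ⟨(ht.1.1 _ hxy).1, fun hxn => hy.2 ?_⟩
  rwa [show y = x from ht.2.1 _ hxy hxn]

lemma KCorrect.exists_clique_image (ht : KCorrect H E E' k t) {C : Finset α}
    (hC : IsKClique H E k C) (hsub : ↑C ⊆ PDom t) :
    ∃ C' : Finset α, IsKClique H E' k C' ∧ C'.card = C.card ∧
      (∀ y, y ∈ C' ↔ ∃ x ∈ C, (x, y) ∈ t) := by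
  classical
  obtain ⟨hCverts, hCP, hCedge, hCcard⟩ := hC
  have hdom : ∀ x ∈ C, ∃ y, (x, y) ∈ t := fun _ hx => hsub hx
  choose! f hf using hdom
  have hinj : Set.InjOn f C := fun x hx x' hx' h =>
    ht.1.eq_of_mem_right (hf x hx) (h ▸ hf x' hx')
  have hvert : ∀ x ∈ C, f x ∈ verts H E' ∧ E'.proj (f x) = E.proj x :=
    fun x hx => ht.2.2.1 _ (hf x hx) (hCverts hx)
  have hproj : (C.image f).val.map E'.proj = C.val.map E.proj := by
    rw [Finset.image_val_of_injOn hinj, Multiset.map_map]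
    exact Multiset.map_congr rfl fun x hx => (hvert x hx).2
  have hcard : (C.image f).card = C.card := Finset.card_image_of_injOn hinj
  refine ⟨C.image f, ⟨?_, ?_, hproj ▸ hCedge, hcard ▸ hCcard⟩, hcard, fun y => ?_⟩
  · simp only [Finset.coe_image, Set.image_subset_iff]
    exact fun x hx => (hvert x hx).1
  · simp only [Finset.mem_image]
    rintro _ ⟨x, hx, rfl⟩ _ ⟨x', hx', rfl⟩ hne
    exact (ht.1.2.2 _ (hf x hx) _ (hf x' hx')).mp (hCP x hx x' hx' (ne_of_apply_ne f hne))
  · simp only [Finset.mem_image]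
    constructor
    · rintro ⟨x, hx, rfl⟩
      exact ⟨x, hx, hf x hx⟩
    · rintro ⟨x, hx, hxy⟩
      exact ⟨x, hx, ht.1.eq_of_mem_left (hf x hx) hxy⟩

/-- `x` is not plebeian since `y` is not, and by (G0) in `E'` the image of its k-clique is `C'`. -/
lemma KCorrect.exists_clique_preimage (hG0' : G0cond H E' k) (ht : KCorrect H E E' k t)
    {x y : α} (hxy : (x, y) ∈ t) {C' : Finset α} (hC' : IsKClique H E' k C') (hyC' : y ∈ C') :
    ∃ C : Finset α, IsKClique H E k C ∧ x ∈ C ∧ C'.val.map E'.proj = C.val.map E.proj := by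
  have hxv : x ∈ verts H E := ht.mem_verts_of_mem_verts hxy (hC'.1 hyC')
  have hnp : ¬ Plebeian H E k x := fun h => ((ht.2.2.2.1 _ hxy).mp h).2 C' hC' hyC'
  obtain ⟨C, hC, hxC⟩ := exists_clique_of_not_plebeian hxv hnp
  obtain ⟨C'', hC'', hyC'', hproj⟩ := ht.2.2.2.2 _ hxy C hC hxC
  exact ⟨C, hC, hxC, hG0'.eq_of_mem hC'' hC' hyC'' hyC' ▸ hproj⟩

lemma KCorrect.pinv (hG0' : G0cond H E' k) (ht : KCorrect H E E' k t) :
    KCorrect H E' E k (PInv t) := by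
  refine ⟨ht.1.pinv, ?_, ?_, ?_, ?_⟩
  · rintro ⟨y, x⟩ hxy hy
    by_contra hne
    have hxv : x ∈ verts H E := ⟨(ht.1.1 _ hxy).1, fun hx => hne (ht.2.1 _ hxy hx).symm⟩
    exact (ht.2.2.1 _ hxy hxv).1.2 hy
  · rintro ⟨y, x⟩ hxy hy
    have hxv := ht.mem_verts_of_mem_verts hxy hy
    exact ⟨hxv, (ht.2.2.1 _ hxy hxv).2.symm⟩
  · rintro ⟨y, x⟩ hxy
    exact (ht.2.2.2.1 _ hxy).symm
  · rintro ⟨y, x⟩ hxy C' hC' hyC'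
    obtain ⟨C, hC, hxC, hproj⟩ := ht.exists_clique_preimage hG0' hxy hC' hyC'
    exact ⟨C, hC, hxC, hproj.symm⟩

lemma KCorrect.PRan_eq_Ck (hG0' : G0cond H E' k) {r : Set (α × α)}
    (ht : KCorrect H E E' k t) (hrt : r ⊆ t) (hdom : PDom t = Ck H E k (PDom r)) :
    PRan t = Ck H E' k (PRan r) := by
  have himage : ∀ {x w : α}, (x, w) ∈ r → ∀ {C : Finset α}, IsKClique H E k C → x ∈ C →
      ∃ C' : Finset α, IsKClique H E' k C' ∧ w ∈ C' ∧ ∀ y, y ∈ C' ↔ ∃ x ∈ C, (x, y) ∈ t := by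
    intro x w hxw C hC hxC
    obtain ⟨C', hC', -, hmem⟩ :=
      ht.exists_clique_image hC (hdom ▸ hC.subset_Ck ⟨x, hxC, w, hxw⟩)
    exact ⟨C', hC', (hmem w).mpr ⟨x, hxC, hrt hxw⟩, hmem⟩
  apply Set.Subset.antisymm
  · rintro y ⟨x, hxy⟩
    have hx : x ∈ Ck H E k (PDom r) := hdom ▸ ⟨y, hxy⟩
    rcases hx with ⟨y', hxy'⟩ | ⟨C, hC, ⟨z, hzC, w, hzw⟩, hxC⟩
    · exact subset_Ck ⟨x, (ht.1.eq_of_mem_left (hrt hxy') hxy).symm ▸ hxy'⟩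
    · obtain ⟨C', hC', hwC', hmem⟩ := himage hzw hC hzC
      exact hC'.subset_Ck (X := PRan r) ⟨w, hwC', z, hzw⟩ ((hmem y).mpr ⟨x, hxC, hxy⟩)
  · rintro y (⟨x, hxy⟩ | ⟨D', hD', ⟨w, hwD', z, hzw⟩, hyD'⟩)
    · exact ⟨x, hrt hxy⟩
    · obtain ⟨D, hD, hzD, -⟩ := ht.exists_clique_preimage hG0' (hrt hzw) hD' hwD'
      obtain ⟨D'', hD'', hwD'', hmem⟩ := himage hzw hD hzD
      obtain ⟨x, -, hxy⟩ := (hmem y).mp (hG0'.eq_of_mem hD' hD'' hwD' hwD'' ▸ hyD')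
      exact ⟨x, hxy⟩

end Correct

end McColm

theorem etaStar_lemma_general {α : Type} (H : McColm.Hypergraph α) (k : ℕ)
    (E E' : McColm.PStruct α)
    (hE : McColm.KGoodEnvelope H k E) (hE' : McColm.KGoodEnvelope H k E')
    (r s : Set (α × α)) (hr : McColm.KNice H E E' k r)
    (hs : McColm.KCorrect H E E' k s) (hrs : r ⊆ s)
    (hdom : McColm.PDom s = McColm.Ck H E k (McColm.PDom r)) :
    McColm.KNice H E E' k s ∧
    McColm.KNice H E' E k (McColm.PInv r) ∧
    (McColm.PInv r ⊆ McColm.PInv s ∧ McColm.KCorrect H E' E k (McColm.PInv s) ∧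
      McColm.PDom (McColm.PInv s) = McColm.Ck H E' k (McColm.PRan r)) ∧
    McColm.PRan s = McColm.Ck H E' k (McColm.PRan r) ∧
    (∀ C : Finset α, McColm.IsKClique H E k C →
      ↑C ⊆ McColm.Ck H E k (McColm.PDom r) →
      ∃ C' : Finset α, McColm.IsKClique H E' k C' ∧ C'.card = C.card ∧
        (∀ y, y ∈ C' ↔ ∃ x ∈ C, (x, y) ∈ s)) ∧
    (∀ C D : Finset α, McColm.IsKClique H E k C → McColm.IsKClique H E k D →
      ↑C ⊆ McColm.Ck H E k (McColm.PDom r) →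
      ↑D ⊆ McColm.Ck H E k (McColm.PDom r) → C ≠ D →
      {y | ∃ x ∈ C, (x, y) ∈ s} ≠ {y | ∃ x ∈ D, (x, y) ∈ s}) := by
  obtain ⟨-, hG0, -, -⟩ := hE
  obtain ⟨-, hG0', -, -⟩ := hE'
  have hran := hs.PRan_eq_Ck hG0' hrs hdom
  have hinv := hs.pinv hG0'
  refine ⟨⟨hs, s, subset_rfl, hs, by rw [hdom, McColm.Ck_Ck hG0]⟩,
    ⟨hr.1.pinv hG0', McColm.PInv s, McColm.PInv_mono hrs, hinv, hran⟩,
    ⟨McColm.PInv_mono hrs, hinv, hran⟩, hran,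
    fun C hC hCsub => hs.exists_clique_image hC (hdom ▸ hCsub), ?_⟩
  intro C D _ _ hC hD hCD himage
  exact hCD (hs.1.eq_of_image_eq (hdom ▸ hC) (hdom ▸ hD) himage)

/-- Let `E`, `E'` be `k`-good envelopes for `H`, `η` (represented by `r`) a
`k`-nice partial isomorphism from `E` to `E'`, and `η*` (represented by `s`) a
`k`-correct extension of `η` with domain `C_k(Dom η)`.  Then: (i) `η*` is
`k`-nice; (ii) `η⁻¹` is `k`-nice and `(η*)⁻¹` is a `k`-correct extension of
`η⁻¹` with domain `C_k(Range η)`; (iii) `Range η* = C_k(Range η)`;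
(iv) `η*` maps every `k`-clique contained in `C_k(Dom η)` onto a `k`-clique of
the same size; and (v) distinct such `k`-cliques map to distinct images. -/
theorem etaStar_lemma {α : Type} (H : McColm.Hypergraph α) (k : ℕ)
    (hk : 3 ≤ k) (E E' : McColm.PStruct α)
    (hE : McColm.KGoodEnvelope H k E) (hE' : McColm.KGoodEnvelope H k E')
    (r s : Set (α × α)) (hr : McColm.KNice H E E' k r)
    (hs : McColm.KCorrect H E E' k s) (hrs : r ⊆ s)
    (hdom : McColm.PDom s = McColm.Ck H E k (McColm.PDom r)) :
    McColm.KNice H E E' k s ∧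
    McColm.KNice H E' E k (McColm.PInv r) ∧
    (McColm.PInv r ⊆ McColm.PInv s ∧ McColm.KCorrect H E' E k (McColm.PInv s) ∧
      McColm.PDom (McColm.PInv s) = McColm.Ck H E' k (McColm.PRan r)) ∧
    McColm.PRan s = McColm.Ck H E' k (McColm.PRan r) ∧
    (∀ C : Finset α, McColm.IsKClique H E k C →
      ↑C ⊆ McColm.Ck H E k (McColm.PDom r) →
      ∃ C' : Finset α, McColm.IsKClique H E' k C' ∧ C'.card = C.card ∧
        (∀ y, y ∈ C' ↔ ∃ x ∈ C, (x, y) ∈ s)) ∧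
    (∀ C D : Finset α, McColm.IsKClique H E k C → McColm.IsKClique H E k D →
      ↑C ⊆ McColm.Ck H E k (McColm.PDom r) →
      ↑D ⊆ McColm.Ck H E k (McColm.PDom r) → C ≠ D →
      {y | ∃ x ∈ C, (x, y) ∈ s} ≠ {y | ∃ x ∈ D, (x, y) ∈ s}) :=
  etaStar_lemma_general H k E E' hE hE' r s hr hs hrs hdom
end
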